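/- Let G be the subgroup of P generated by (x,y) ↦ (−x,−y), (x,y) ↦ (y,x) and (x,y) ↦ (1/y,x), and let G' be the subgroup of P generated by (x,y) ↦ (1/x,1/y), (x,y) ↦ (y,x) and (x,y) ↦ (−x,y). Then G and G' are both isomorphic to C₂ × D₄ of order 16, and there exists h ∈ P with h·G·h⁻¹ = G'. -/

import Mathlib

noncomputable section

/-- GL₂(ℂ). -/
abbrev GL2 : Type := Matrix.GeneralLinearGroup (Fin 2) ℂ

/-- PGL₂(ℂ) = GL₂(ℂ) modulo its center. -/
abbrev PGL2 : Type := GL2 ⧸ Subgroup.center GL2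

/-- The class in PGL₂(ℂ) of a 2×2 matrix of nonzero determinant, acting as the
corresponding Möbius transformation x ↦ (ax+b)/(cx+d). -/
def pg (A : Matrix (Fin 2) (Fin 2) ℂ) (h : A.det ≠ 0) : PGL2 :=
  QuotientGroup.mk (Matrix.GeneralLinearGroup.mkOfDetNeZero A h)

/-- PGL₂(ℂ) × PGL₂(ℂ). -/
abbrev Gp : Type := PGL2 × PGL2

/-- The swap automorphism of PGL₂(ℂ) × PGL₂(ℂ). -/
def swapAut : MulAut Gp := MulEquiv.prodComm

lemma swapAut_sq : swapAut * swapAut = 1 := by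
  ext p
  · simp [swapAut, MulAut.mul_apply, MulAut.one_apply]
  · simp [swapAut, MulAut.mul_apply, MulAut.one_apply]

/-- The action of C₂ (realized as ℤˣ) on PGL₂(ℂ) × PGL₂(ℂ) whose generator swaps
the two factors. -/
def phiP : ℤˣ →* MulAut Gp where
  toFun u := if u = 1 then 1 else swapAut
  map_one' := if_pos rfl
  map_mul' := by
    intro a b
    have h1 : (-1 : ℤˣ) ≠ 1 := by decide
    rcases Int.units_eq_one_or a with ha | ha <;> rcases Int.units_eq_one_or b with hb | hb <;>
      subst ha <;> subst hb <;>
      simp [h1, swapAut_sq]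

/-- P = (PGL₂(ℂ) × PGL₂(ℂ)) ⋊ C₂, the automorphism group of ℙ¹×ℙ¹: an element
⟨(g₁,g₂), ε⟩ acts on (x,y) by first swapping the coordinates if ε = −1 and then applying
the Möbius transformations g₁, g₂ on the two factors. -/
abbrev P : Type := SemidirectProduct Gp ℤˣ phiP

/-- The coordinate swap (x,y) ↦ (y,x). -/
def σP : P := SemidirectProduct.inr (-1 : ℤˣ)

/-- The element of P acting coordinatewise by a pair of Möbius transformations. -/
def pl (g : Gp) : P := SemidirectProduct.inl g

/-- The Möbius transformation x ↦ −x. -/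
def mNeg : PGL2 := pg !![(-1 : ℂ), 0; 0, 1] (by norm_num [Matrix.det_fin_two_of])

/-- The Möbius transformation x ↦ 1/x. -/
def mInv : PGL2 := pg !![(0 : ℂ), 1; 1, 0] (by norm_num [Matrix.det_fin_two_of])

/-- The Möbius transformation x ↦ ζ₄·x, for the primitive 4th root of unity ζ₄ = i. -/
def mI : PGL2 := pg !![Complex.I, 0; 0, 1]
  (by simp [Matrix.det_fin_two_of, Complex.I_ne_zero])

/-- The Möbius transformation x ↦ (x−1)/(x+1). -/
def mU : PGL2 := pg !![(1 : ℂ), -1; 1, 1] (by norm_num [Matrix.det_fin_two_of])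

/-- G = ⟨(x,y) ↦ (−x,−y), (x,y) ↦ (y,x), (x,y) ↦ (1/y, x)⟩. -/
def G14 : Subgroup P := Subgroup.closure {pl (mNeg, mNeg), σP, pl (mInv, 1) * σP}

/-- G' = ⟨(x,y) ↦ (1/x,1/y), (x,y) ↦ (y,x), (x,y) ↦ (−x, y)⟩. -/
def G14' : Subgroup P := Subgroup.closure {pl (mInv, mInv), σP, pl (mNeg, 1)}

/-!
`G` is generated by the central involution `a = (−x, −y)`, the swap `s` and the element
`t = (1/y, x)` of order 4 with `s t s = t⁻¹`, so sending the generators of `C₂ × D₄` to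
`a`, `t`, `s` gives a homomorphism onto `G`. It is injective because `C₂ × D₄` is a 2-group: a
nontrivial kernel would contain a nontrivial central element, and these map to `a`,
`t² = (1/x, 1/y)` and `a t²`. The Cayley transform `u = (x − 1)/(x + 1)` satisfies
`u(−x) = 1/u(x)` and `u(1/x) = −u(x)`, so conjugation by `(u, u)` sends `a, s, t` to
`(1/x, 1/y)`, `s` and `(−x, y) ∘ s`, which generate `G'`.
-/

open Subgroup Matrix

theorem IsPGroup.exists_ne_one_mem_center_of_normal {p : ℕ} [Fact p.Prime] {G : Type*} [Group G]
    [Finite G] (hG : IsPGroup p G) (N : Subgroup G) [N.Normal] (hN : N ≠ ⊥) :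
    ∃ z ∈ N, z ∈ center G ∧ z ≠ 1 := by
  have hdvd : p ∣ Nat.card N := by
    obtain ⟨k, hk, hcard⟩ :=
      (hG.to_subgroup N).nontrivial_iff_card.mp (N.nontrivial_iff_ne_bot.mpr hN)
    exact hcard ▸ dvd_pow_self p hk.ne'
  obtain ⟨z, hz, hz1⟩ := (hG.of_equiv ConjAct.toConjAct)
    |>.exists_fixed_point_of_prime_dvd_card_of_fixed_point N hdvd (a := 1) (fun g => smul_one g)
  refine ⟨z, z.2, mem_center_iff.mpr fun g => ?_, fun h => hz1 (Subtype.ext h.symm)⟩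
  have hconj : g * z * g⁻¹ = z := congrArg Subtype.val (hz (ConjAct.toConjAct g))
  exact mul_inv_eq_iff_eq_mul.mp hconj

theorem IsPGroup.injective_of_map_ne_one_of_mem_center {p : ℕ} [Fact p.Prime] {G H : Type*}
    [Group G] [Group H] [Finite G] (hG : IsPGroup p G) (f : G →* H)
    (hf : ∀ z ∈ center G, z ≠ 1 → f z ≠ 1) : Function.Injective f := by
  rw [← MonoidHom.ker_eq_bot_iff]
  by_contra hker
  obtain ⟨z, hzker, hz, hz1⟩ := hG.exists_ne_one_mem_center_of_normal f.ker hker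
  exact hf z hz hz1 hzker

theorem Subgroup.closure_pair_mul_right {G : Type*} [Group G] (x y : G) :
    closure {x, y * x} = closure {x, y} := by
  apply le_antisymm <;> rw [closure_le, Set.insert_subset_iff, Set.singleton_subset_iff]
  · exact ⟨subset_closure (by simp),
      mul_mem (subset_closure (by simp)) (subset_closure (by simp))⟩
  · refine ⟨subset_closure (by simp), ?_⟩
    simpa using mul_mem (subset_closure (by simp) : y * x ∈ closure {x, y * x})
      (inv_mem (subset_closure (by simp) : x ∈ closure {x, y * x}))

namespace ZMod

variable {n : ℕ} [NeZero n] {M : Type*} [Monoid M]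

def powHom (a : M) (ha : a ^ n = 1) : Multiplicative (ZMod n) →* M where
  toFun i := a ^ i.toAdd.val
  map_one' := by simp
  map_mul' i j := by
    rw [toAdd_mul, ZMod.val_add, ← pow_eq_pow_mod _ ha, pow_add]

@[simp]
theorem powHom_apply (a : M) (ha : a ^ n = 1) (i : Multiplicative (ZMod n)) :
    powHom a ha i = a ^ i.toAdd.val := rfl

theorem powHom_ofAdd_one (a : M) (ha : a ^ n = 1) : powHom a ha (.ofAdd 1) = a := by
  rw [powHom_apply, toAdd_ofAdd, ZMod.val_one_eq_one_mod, ← pow_eq_pow_mod 1 ha, pow_one]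

theorem range_powHom {G : Type*} [Group G] (a : G) (ha : a ^ n = 1) :
    (powHom a ha).range = zpowers a := by
  refine le_antisymm ?_ (zpowers_le.mpr ⟨_, powHom_ofAdd_one a ha⟩)
  rintro - ⟨i, rfl⟩
  exact pow_mem (mem_zpowers a) _

theorem commute_powHom_left {a x : M} (ha : a ^ n = 1) (hx : Commute a x)
    (i : Multiplicative (ZMod n)) : Commute (powHom a ha i) x :=
  hx.pow_left _

end ZMod

namespace DihedralGroup

theorem mem_center_four_iff (z : DihedralGroup 4) :
    z ∈ center (DihedralGroup 4) ↔ z = 1 ∨ z = r 2 := by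
  rw [mem_center_iff]
  revert z
  decide

variable {n : ℕ} [NeZero n] {G : Type*} [Group G]

def lift (a b : G) (ha : a ^ n = 1) (hb : b * b = 1) (hab : SemiconjBy b a a⁻¹) :
    DihedralGroup n →* G where
  toFun
    | r i => ZMod.powHom a ha (.ofAdd i)
    | sr i => b * ZMod.powHom a ha (.ofAdd i)
  map_one' := map_one _
  map_mul' := by
    have hconj (i : ZMod n) :
        b * ZMod.powHom a ha (.ofAdd i) = ZMod.powHom a ha (.ofAdd (-i)) * b := by
      rw [ofAdd_neg, map_inv, ZMod.powHom_apply, ← inv_pow]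
      exact hab.pow_right _
    rintro (i | i) (j | j)
    · simp only [r_mul_r, ofAdd_add, map_mul]
    · simp only [r_mul_sr]
      rw [sub_eq_neg_add, ofAdd_add, map_mul, ← mul_assoc, hconj, neg_neg, mul_assoc]
    · simp only [sr_mul_r, ofAdd_add, map_mul, mul_assoc]
    · simp only [sr_mul_sr]
      rw [sub_eq_neg_add, ofAdd_add, map_mul, hconj, mul_assoc, ← mul_assoc b, hb, one_mul]

variable (a b : G) (ha : a ^ n = 1) (hb : b * b = 1) (hab : SemiconjBy b a a⁻¹)

@[simp]
theorem lift_r (i : ZMod n) : lift a b ha hb hab (r i) = ZMod.powHom a ha (.ofAdd i) := rfl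

@[simp]
theorem lift_sr (i : ZMod n) : lift a b ha hb hab (sr i) = b * ZMod.powHom a ha (.ofAdd i) := rfl

theorem range_lift : (lift a b ha hb hab).range = closure {a, b} := by
  have hpow : (ZMod.powHom a ha).range ≤ closure {a, b} := by
    rw [ZMod.range_powHom]
    exact zpowers_le.mpr (subset_closure (by simp))
  apply le_antisymm
  · rintro - ⟨i | i, rfl⟩
    · exact hpow ⟨_, rfl⟩
    · exact mul_mem (subset_closure (by simp)) (hpow ⟨_, rfl⟩)
  · rw [closure_le, Set.insert_subset_iff, Set.singleton_subset_iff]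
    exact ⟨⟨r 1, ZMod.powHom_ofAdd_one a ha⟩, ⟨sr 0, by simp⟩⟩

theorem commute_lift {x : G} (hxa : Commute x a) (hxb : Commute x b) (d : DihedralGroup n) :
    Commute x (lift a b ha hb hab d) := by
  rcases d with i | i
  · exact hxa.pow_right _
  · exact hxb.mul_right (hxa.pow_right _)

end DihedralGroup

theorem pg_mul {A B : Matrix (Fin 2) (Fin 2) ℂ} (hA : A.det ≠ 0) (hB : B.det ≠ 0) :
    pg A hA * pg B hB = pg (A * B) (by simp [det_mul, hA, hB]) := by
  rw [pg, pg, pg, ← QuotientGroup.mk_mul]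
  exact congrArg _ (Units.ext rfl)

theorem pg_one : pg 1 (by simp) = 1 := by
  rw [pg, ← QuotientGroup.mk_one]
  exact congrArg _ (Units.ext rfl)

theorem pg_eq_pg_iff {A B : Matrix (Fin 2) (Fin 2) ℂ} (hA : A.det ≠ 0) (hB : B.det ≠ 0) :
    pg A hA = pg B hB ↔ ∃ c : ℂ, B = c • A := by
  rw [pg, pg, QuotientGroup.eq, GeneralLinearGroup.mem_center_iff_val_mem_range_scalar]
  refine exists_congr fun c => ?_
  rw [Units.val_mul, Units.eq_inv_mul_iff_mul_eq, scalar_apply, ← smul_eq_mul_diagonal,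
    GeneralLinearGroup.val_mkOfDetNeZero, GeneralLinearGroup.val_mkOfDetNeZero, eq_comm]

theorem mNeg_mul_self : mNeg * mNeg = 1 := by
  rw [mNeg, pg_mul, ← pg_one, pg_eq_pg_iff]
  exact ⟨1, by simp [one_fin_two]⟩

theorem mInv_mul_self : mInv * mInv = 1 := by
  rw [mInv, pg_mul, ← pg_one, pg_eq_pg_iff]
  exact ⟨1, by simp [one_fin_two]⟩

theorem commute_mNeg_mInv : Commute mNeg mInv := by
  rw [Commute, SemiconjBy, mNeg, mInv, pg_mul, pg_mul, pg_eq_pg_iff]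
  exact ⟨-1, by simp⟩

theorem mU_mul_mNeg : mU * mNeg = mInv * mU := by
  rw [mU, mNeg, mInv, pg_mul, pg_mul, pg_eq_pg_iff]
  exact ⟨-1, by simp⟩

theorem mU_mul_mInv : mU * mInv = mNeg * mU := by
  rw [mU, mNeg, mInv, pg_mul, pg_mul, pg_eq_pg_iff]
  exact ⟨1, by simp⟩

theorem mNeg_ne_one : mNeg ≠ 1 := by
  rw [mNeg, Ne, ← pg_one, pg_eq_pg_iff]
  rintro ⟨c, hc⟩
  obtain ⟨h₁, rfl⟩ : 1 = -c ∧ 1 = c := by simpa [one_fin_two] using congrFun₂ hc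
  norm_num at h₁

theorem mInv_ne_one : mInv ≠ 1 := by
  rw [mInv, Ne, ← pg_one, pg_eq_pg_iff]
  rintro ⟨c, hc⟩
  simpa [one_fin_two] using congrFun₂ hc

theorem mNeg_mul_mInv_ne_one : mNeg * mInv ≠ 1 := by
  rw [mNeg, mInv, pg_mul, Ne, ← pg_one, pg_eq_pg_iff]
  rintro ⟨c, hc⟩
  simpa [one_fin_two] using congrFun₂ hc

theorem pl_mul (g h : Gp) : pl g * pl h = pl (g * h) :=
  (map_mul SemidirectProduct.inl g h).symm

theorem pl_eq_one_iff {g : Gp} : pl g = 1 ↔ g = 1 :=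
  map_eq_one_iff _ SemidirectProduct.inl_injective

theorem σP_mul_self : σP * σP = 1 := by
  rw [σP, ← map_mul, show (-1 : ℤˣ) * -1 = 1 by decide, map_one]

theorem σP_mul_pl (g : Gp) : σP * pl g = pl g.swap * σP := by
  have h : phiP (-1) g = g.swap := by
    simp only [phiP, MonoidHom.coe_mk, OneHom.coe_mk, if_neg (by decide : (-1 : ℤˣ) ≠ 1)]
    rfl
  rw [pl, pl, ← h, SemidirectProduct.inl_aut, σP, map_inv, inv_mul_cancel_right]

def negNeg : P := pl (mNeg, mNeg)

def rot4 : P := pl (mInv, 1) * σP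

theorem G14_eq_closure : G14 = closure {negNeg, σP, rot4} := rfl

theorem negNeg_pow_two : negNeg ^ 2 = 1 := by
  rw [negNeg, sq, pl_mul, Prod.mk_mul_mk, mNeg_mul_self, pl_eq_one_iff]
  rfl

theorem rot4_pow_two : rot4 ^ 2 = pl (mInv, mInv) := by
  rw [rot4, sq, mul_assoc, ← mul_assoc σP, σP_mul_pl, mul_assoc, σP_mul_self, mul_one, pl_mul,
    Prod.swap_prod_mk, Prod.mk_mul_mk, mul_one, one_mul]

theorem rot4_pow_four : rot4 ^ 4 = 1 := by
  rw [show 4 = 2 * 2 from rfl, pow_mul, rot4_pow_two, sq, pl_mul, Prod.mk_mul_mk, mInv_mul_self,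
    pl_eq_one_iff]
  rfl

theorem semiconjBy_σP_rot4 : SemiconjBy σP rot4 rot4⁻¹ := by
  have hx : pl (mInv, 1) * pl (mInv, 1) = 1 := by
    rw [pl_mul, Prod.mk_mul_mk, mInv_mul_self, mul_one, pl_eq_one_iff]
    rfl
  rw [SemiconjBy, eq_inv_mul_iff_mul_eq, rot4, mul_assoc _ σP, ← mul_assoc σP σP, σP_mul_self,
    one_mul, ← mul_assoc, hx, one_mul]

theorem commute_negNeg_σP : Commute negNeg σP :=
  (σP_mul_pl (mNeg, mNeg)).symm

theorem commute_negNeg_rot4 : Commute negNeg rot4 := by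
  refine Commute.mul_right ?_ commute_negNeg_σP
  rw [negNeg, Commute, SemiconjBy, pl_mul, pl_mul, Prod.mk_mul_mk, Prod.mk_mul_mk,
    commute_mNeg_mInv.eq, mul_one, one_mul]

def c2d4Hom : Multiplicative (ZMod 2) × DihedralGroup 4 →* P :=
  MonoidHom.noncommCoprod (ZMod.powHom negNeg negNeg_pow_two)
    (DihedralGroup.lift rot4 σP rot4_pow_four σP_mul_self semiconjBy_σP_rot4) fun m d =>
    ZMod.commute_powHom_left _
      (DihedralGroup.commute_lift _ _ _ _ _ commute_negNeg_rot4 commute_negNeg_σP d) m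

theorem range_c2d4Hom : c2d4Hom.range = G14 := by
  rw [c2d4Hom, MonoidHom.noncommCoprod_range, ZMod.range_powHom, DihedralGroup.range_lift,
    zpowers_eq_closure, ← Subgroup.closure_union, Set.singleton_union, Set.pair_comm]
  rfl

theorem injective_c2d4Hom : Function.Injective c2d4Hom := by
  have h2 : IsPGroup 2 (Multiplicative (ZMod 2) × DihedralGroup 4) :=
    IsPGroup.of_card (n := 4) (by simp [DihedralGroup.card])
  have hC₂ : ∀ m : Multiplicative (ZMod 2), m = 1 ∨ m = .ofAdd 1 := by decide
  have ha : negNeg ≠ 1 := by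
    rw [negNeg, Ne, pl_eq_one_iff, Prod.mk_eq_one]
    exact fun h => mNeg_ne_one h.1
  have ht : rot4 ^ 2 ≠ 1 := by
    rw [rot4_pow_two, Ne, pl_eq_one_iff, Prod.mk_eq_one]
    exact fun h => mInv_ne_one h.1
  have hat : negNeg * rot4 ^ 2 ≠ 1 := by
    rw [negNeg, rot4_pow_two, pl_mul, Prod.mk_mul_mk, Ne, pl_eq_one_iff, Prod.mk_eq_one]
    exact fun h => mNeg_mul_mInv_ne_one h.1
  refine h2.injective_of_map_ne_one_of_mem_center c2d4Hom ?_
  rintro ⟨m, d⟩ hz hz1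
  rw [Subgroup.center_prod, mem_prod] at hz
  obtain rfl | rfl := hC₂ m <;> obtain rfl | rfl := (DihedralGroup.mem_center_four_iff d).mp hz.2
  all_goals simp only [c2d4Hom, MonoidHom.noncommCoprod_apply, map_one, one_mul, mul_one,
    DihedralGroup.lift_r, ZMod.powHom_apply, toAdd_ofAdd, ZMod.val_one, pow_one]
  exacts [absurd rfl hz1, ht, ha, hat]

def cayley : P := pl (mU, mU)

theorem cayley_mul_negNeg : cayley * negNeg = pl (mInv, mInv) * cayley := by
  rw [cayley, negNeg, pl_mul, pl_mul, Prod.mk_mul_mk, Prod.mk_mul_mk, mU_mul_mNeg]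

theorem cayley_mul_σP : cayley * σP = σP * cayley :=
  (σP_mul_pl (mU, mU)).symm

theorem cayley_mul_rot4 : cayley * rot4 = pl (mNeg, 1) * σP * cayley := by
  rw [cayley, rot4, ← mul_assoc, pl_mul, mul_assoc _ σP, σP_mul_pl, ← mul_assoc, pl_mul,
    Prod.swap_prod_mk, Prod.mk_mul_mk, Prod.mk_mul_mk, mU_mul_mInv, mul_one, one_mul]

theorem map_conj_cayley_G14 : G14.map (MulAut.conj cayley).toMonoidHom = G14' := by
  have hconj {x y : P} (h : cayley * x = y * cayley) : (MulAut.conj cayley).toMonoidHom x = y := by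
    rw [MulEquiv.coe_toMonoidHom, MulAut.conj_apply, h, mul_inv_cancel_right]
  rw [G14_eq_closure, MonoidHom.map_closure, Set.image_insert_eq, Set.image_insert_eq,
    Set.image_singleton, hconj cayley_mul_negNeg, hconj cayley_mul_σP, hconj cayley_mul_rot4, G14',
    Set.insert_eq, Subgroup.closure_union, closure_pair_mul_right, ← Subgroup.closure_union,
    ← Set.insert_eq]

theorem C2xD4_actions_conjugate :
    Nonempty (G14 ≃* Multiplicative (ZMod 2) × DihedralGroup 4) ∧
    Nonempty (G14' ≃* Multiplicative (ZMod 2) × DihedralGroup 4) ∧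
    ∃ h : P, Subgroup.map (MulAut.conj h).toMonoidHom G14 = G14' := by
  let e : Multiplicative (ZMod 2) × DihedralGroup 4 ≃* G14 :=
    (MonoidHom.ofInjective injective_c2d4Hom).trans (MulEquiv.subgroupCongr range_c2d4Hom)
  let e' : G14 ≃* G14' := (G14.equivMapOfInjective _ (MulAut.conj cayley).injective).trans
    (MulEquiv.subgroupCongr map_conj_cayley_G14)
  exact ⟨⟨e.symm⟩, ⟨e'.symm.trans e.symm⟩, cayley, map_conj_cayley_G14⟩

end
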